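/- For an N×N complex Hadamard matrix H define the set of Haagerup invariants Λ(H) = { H_{ij}·conj(H_{kj})·H_{kl}·conj(H_{il}) : i,j,k,l ∈ {1,…,N} }. If two complex Hadamard matrices H₁ and H₂ of order N are equivalent, then Λ(H₁) = Λ(H₂). Consequently, if Λ(H₁) ≠ Λ(H₂) then H₁ and H₂ are not equivalent. -/

import Mathlib

/-- A complex Hadamard matrix: all entries of modulus one, and `H * Hᴴ = N • 1`. -/
def IsComplexHadamard {n : Type*} [Fintype n] [DecidableEq n] (H : Matrix n n ℂ) : Prop :=
  (∀ i j, ‖H i j‖ = 1) ∧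
    H * H.conjTranspose = (Fintype.card n : ℂ) • (1 : Matrix n n ℂ)

/-- A diagonal unitary matrix. -/
def IsDiagUnitary {n : Type*} [Fintype n] [DecidableEq n] (D : Matrix n n ℂ) : Prop :=
  ∃ d : n → ℂ, (∀ i, ‖d i‖ = 1) ∧ D = Matrix.diagonal d

/-- A permutation matrix. -/
def IsPermMatrix {n : Type*} [Fintype n] [DecidableEq n] (P : Matrix n n ℂ) : Prop :=
  ∃ σ : Equiv.Perm n, P = σ.permMatrix ℂ

/-- Equivalence of complex Hadamard matrices:
`H₁ = D₁ · P₁ · H₂ · P₂ · D₂` for diagonal unitary `D₁, D₂` and permutation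
matrices `P₁, P₂`. -/
def HadamardEquiv {n : Type*} [Fintype n] [DecidableEq n]
    (H₁ H₂ : Matrix n n ℂ) : Prop :=
  ∃ D₁ P₁ P₂ D₂ : Matrix n n ℂ,
    IsDiagUnitary D₁ ∧ IsDiagUnitary D₂ ∧ IsPermMatrix P₁ ∧ IsPermMatrix P₂ ∧
      H₁ = D₁ * P₁ * H₂ * P₂ * D₂

/-- The set of Haagerup invariants
`Λ(H) = { H_ij · conj(H_kj) · H_kl · conj(H_il) }`. -/
def haagerupSet {n : Type*} (H : Matrix n n ℂ) : Set ℂ :=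
  { z | ∃ i j k l : n,
      z = H i j * (starRingEnd ℂ) (H k j) * H k l * (starRingEnd ℂ) (H i l) }

lemma entry_formula {n : Type*} [Fintype n] [DecidableEq n]
    (H : Matrix n n ℂ) (d e : n → ℂ) (σ τ : Equiv.Perm n) (i j : n) :
    (Matrix.diagonal d * σ.permMatrix ℂ * H * τ.permMatrix ℂ * Matrix.diagonal e) i j
      = d i * H (σ i) (τ.symm j) * e j := by
  rw [Matrix.mul_diagonal, mul_assoc, mul_assoc, PEquiv.toMatrix_toPEquiv_mul,
    PEquiv.mul_toMatrix_toPEquiv, Matrix.diagonal_mul]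
  simp only [Matrix.submatrix_apply, id_eq]

lemma unit_mul_conj (z : ℂ) (h : ‖z‖ = 1) : z * (starRingEnd ℂ) z = 1 := by
  rw [Complex.mul_conj]; rw [Complex.normSq_eq_norm_sq, h]
  norm_num

lemma inv_eq {n : Type*} [Fintype n] [DecidableEq n]
    (H : Matrix n n ℂ) (d e : n → ℂ) (σ τ : Equiv.Perm n)
    (hd : ∀ i, ‖d i‖ = 1) (he : ∀ i, ‖e i‖ = 1) (i j k l : n) :
    letI H₁ := Matrix.diagonal d * σ.permMatrix ℂ * H * τ.permMatrix ℂ * Matrix.diagonal e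
    H₁ i j * (starRingEnd ℂ) (H₁ k j) * H₁ k l * (starRingEnd ℂ) (H₁ i l)
      = H (σ i) (τ.symm j) * (starRingEnd ℂ) (H (σ k) (τ.symm j)) * H (σ k) (τ.symm l)
        * (starRingEnd ℂ) (H (σ i) (τ.symm l)) := by
  simp only [entry_formula, map_mul]
  have h1 := unit_mul_conj _ (hd i)
  have h2 := unit_mul_conj _ (hd k)
  have h3 := unit_mul_conj _ (he j)
  have h4 := unit_mul_conj _ (he l)
  set A := H (σ i) (τ.symm j); set B := H (σ k) (τ.symm j)
  set C := H (σ k) (τ.symm l); set D := H (σ i) (τ.symm l)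
  calc d i * A * e j * ((starRingEnd ℂ) (d k) * (starRingEnd ℂ) B * (starRingEnd ℂ) (e j))
        * (d k * C * e l) * ((starRingEnd ℂ) (d i) * (starRingEnd ℂ) D * (starRingEnd ℂ) (e l))
      = (d i * (starRingEnd ℂ) (d i)) * ((d k * (starRingEnd ℂ) (d k))
        * ((e j * (starRingEnd ℂ) (e j)) * ((e l * (starRingEnd ℂ) (e l))
        * (A * (starRingEnd ℂ) B * C * (starRingEnd ℂ) D)))) := by ring
    _ = A * (starRingEnd ℂ) B * C * (starRingEnd ℂ) D := by
        rw [h1, h2, h3, h4]; ring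

lemma haagerup_eq {n : Type*} [Fintype n] [DecidableEq n]
    (H : Matrix n n ℂ) (d e : n → ℂ) (σ τ : Equiv.Perm n)
    (hd : ∀ i, ‖d i‖ = 1) (he : ∀ i, ‖e i‖ = 1) :
    haagerupSet (Matrix.diagonal d * σ.permMatrix ℂ * H * τ.permMatrix ℂ * Matrix.diagonal e)
      = haagerupSet H := by
  ext z
  simp only [haagerupSet, Set.mem_setOf_eq]
  constructor
  · rintro ⟨i, j, k, l, rfl⟩
    exact ⟨σ i, τ.symm j, σ k, τ.symm l, inv_eq H d e σ τ hd he i j k l⟩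
  · rintro ⟨i, j, k, l, rfl⟩
    refine ⟨σ.symm i, τ j, σ.symm k, τ l, ?_⟩
    have := (inv_eq H d e σ τ hd he (σ.symm i) (τ j) (σ.symm k) (τ l)).symm
    simpa using this

/-- If two complex Hadamard matrices of order `N` are equivalent then
their sets of Haagerup invariants coincide; consequently, matrices with different
sets of invariants are not equivalent. -/
theorem haagerup_invariant (N : ℕ) (H₁ H₂ : Matrix (Fin N) (Fin N) ℂ)
    (h₁ : IsComplexHadamard H₁) (h₂ : IsComplexHadamard H₂) :
    (HadamardEquiv H₁ H₂ → haagerupSet H₁ = haagerupSet H₂) ∧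
    (haagerupSet H₁ ≠ haagerupSet H₂ → ¬ HadamardEquiv H₁ H₂) := by
  have main : HadamardEquiv H₁ H₂ → haagerupSet H₁ = haagerupSet H₂ := by
    rintro ⟨D₁, P₁, P₂, D₂, ⟨d, hd, rfl⟩, ⟨e, he, rfl⟩, ⟨σ, rfl⟩, ⟨τ, rfl⟩, rfl⟩
    exact haagerup_eq H₂ d e σ τ hd he
  exact ⟨main, fun hne heq => hne (main heq)⟩
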